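/- arXiv:1501.00079 — 4 statements merged into one kernel-verified Lean document; each statement's English description precedes it below -/
import Mathlib

section
/- Let G be a connected simple graph with n > 3 vertices and m edges. If G is triangle-free, then mc(G) = m − n + 2. -/
/-!
For the lower bound, give all edges of a spanning tree one color and every other edge a color of
its own. For the upper bound, fix an edge `xy`. As `G` is triangle-free, every other vertex `v`
has a non-neighbour `r ∈ {x, y}`, and `v` is charged to the color `k` of a monochromatic path from
`v` to `r`. In the `k`-colored subgraph, choosing for each charged vertex an edge towards its root
along a shortest path gives an injection into the `k`-colored edges, provided `x` and `y` are
merged into a single root when they are `k`-connected; one further vertex (`y`, or a `k`-neighbour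
of a root, which is a `G`-neighbour of it and so cannot be charged to `k`) yields one more edge.
Summing over the colors gives `(n - 2) + #colors ≤ m`.
-/

open SimpleGraph Filter Real

/-- An edge-coloring `c` (colors on vertex pairs, only the values on edges matter)
of `G` is a monochromatic connection coloring (MC-coloring) if every two vertices
are joined by a path all of whose edges receive the same color. -/
def IsMCColoring {V : Type*} (G : SimpleGraph V) (c : Sym2 V → ℕ) : Prop :=
  ∀ u v : V, ∃ p : G.Walk u v, p.IsPath ∧ ∃ k : ℕ, ∀ e ∈ p.edges, c e = k

/-- `mcNum G` is the maximum number of colors (counted on the edges of `G`)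
used in an MC-coloring of `G`; it is `0` if `G` admits no MC-coloring
(in particular if `G` is disconnected). -/
noncomputable def mcNum {V : Type*} (G : SimpleGraph V) : ℕ :=
  sSup {k | ∃ c : Sym2 V → ℕ, IsMCColoring G c ∧ (Set.image c G.edgeSet).ncard = k}

namespace SimpleGraph

variable {V : Type*}

lemma Reachable.exists_adj_dist_lt {H : SimpleGraph V} {v r : V} (hvr : H.Reachable v r)
    (hne : v ≠ r) : ∃ w, H.Adj v w ∧ H.dist w r < H.dist v r := by
  obtain ⟨p, hp⟩ := hvr.exists_walk_length_eq_dist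
  cases p with
  | nil => exact absurd rfl hne
  | cons hadj q => exact ⟨_, hadj, hp ▸ (dist_le q).trans_lt (Nat.lt_succ_self _)⟩

open Finset in
lemma card_le_card_edgeFinset_of_reachable_roots (H : SimpleGraph V)
    [Fintype H.edgeSet] {R S : Finset V}
    (hR : ∀ r ∈ R, ∀ r' ∈ R, H.Reachable r r' → r = r') (hSR : Disjoint S R)
    (hS : ∀ v ∈ S, ∃ r ∈ R, H.Reachable v r) : #S ≤ #H.edgeFinset := by
  choose! root hroot hreach using hS
  have hparent : ∀ v ∈ S, ∃ w, H.Adj v w ∧ H.dist w (root v) < H.dist v (root v) :=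
    fun v hv => (hreach v hv).exists_adj_dist_lt fun h =>
      Finset.disjoint_left.1 hSR hv (h ▸ hroot v hv)
  choose! parent hadj hdist using hparent
  refine card_le_card_of_injOn (fun v => s(v, parent v))
    (fun v hv => mem_edgeFinset.2 (hadj v hv)) fun v hv w hw hvw => ?_
  by_contra hne
  obtain ⟨hv_eq, hw_eq⟩ : v = parent w ∧ parent v = w := by
    simpa [Sym2.eq_iff, hne] using hvw
  have hroot_eq : root v = root w := hR _ (hroot v hv) _ (hroot w hw)
    ((hreach v hv).symm.trans ((hw_eq ▸ (hadj v hv).reachable).trans (hreach w hw)))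
  have h₁ := hdist v hv
  have h₂ := hdist w hw
  rw [hw_eq, hroot_eq] at h₁
  rw [← hv_eq] at h₂
  omega

open Finset in
lemma card_add_one_le_card_edgeFinset_of_reachable_nonadj [DecidableEq V]
    {G H : SimpleGraph V} (hHG : H ≤ G) [Fintype H.edgeSet] (hH : H.edgeSet.Nonempty)
    {x y : V} (hxy : x ≠ y) {C : Finset V} (hC : Disjoint C {x, y})
    (hreach : ∀ v ∈ C, ∃ r ∈ ({x, y} : Finset V), ¬ G.Adj v r ∧ H.Reachable v r) :
    #C + 1 ≤ #H.edgeFinset := by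
  by_cases hxy_reach : H.Reachable x y
  · have hyC : y ∉ C := fun hy => Finset.disjoint_left.1 hC hy (by simp)
    have hS : ∀ v ∈ insert y C, ∃ r ∈ ({x} : Finset V), H.Reachable v r := by
      simp only [mem_insert, mem_singleton, exists_eq_left]
      rintro v (rfl | hv)
      · exact hxy_reach.symm
      · obtain ⟨r, hr, -, hvr⟩ := hreach v hv
        simp only [mem_insert, mem_singleton] at hr
        obtain rfl | rfl := hr
        exacts [hvr, hvr.trans hxy_reach.symm]
    have := card_le_card_edgeFinset_of_reachable_roots H (by simp) ?_ hS
    · rwa [card_insert_of_notMem hyC] at this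
    · exact disjoint_insert_left.2
        ⟨by simpa using hxy.symm, disjoint_of_subset_right (by simp) hC⟩
  · have hR : ∀ r ∈ ({x, y} : Finset V), ∀ r' ∈ ({x, y} : Finset V),
        H.Reachable r r' → r = r' := by
      simp only [mem_insert, mem_singleton]
      rintro r (rfl | rfl) r' (rfl | rfl) h
      exacts [rfl, absurd h hxy_reach, absurd h.symm hxy_reach, rfl]
    obtain rfl | ⟨v₀, hv₀⟩ := C.eq_empty_or_nonempty
    · simpa [Finset.card_pos] using hH
    obtain ⟨r₀, hr₀, -, hv₀r₀⟩ := hreach v₀ hv₀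
    have hv₀r₀_ne : v₀ ≠ r₀ := fun h => Finset.disjoint_left.1 hC hv₀ (h ▸ hr₀)
    obtain ⟨w, hr₀w, -⟩ := hv₀r₀.symm.exists_adj_dist_lt hv₀r₀_ne.symm
    have hwR : w ∉ ({x, y} : Finset V) := fun hw => hr₀w.ne (hR _ hr₀ _ hw hr₀w.reachable)
    -- `w` is a `G`-neighbour of its only reachable root `r₀`, so it cannot lie in `C`.
    have hwC : w ∉ C := fun hw => by
      obtain ⟨r, hr, hnadj, hwr⟩ := hreach w hw
      obtain rfl := hR _ hr₀ _ hr (hr₀w.reachable.trans hwr)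
      exact hnadj (hHG hr₀w).symm
    have hS : ∀ v ∈ insert w C, ∃ r ∈ ({x, y} : Finset V), H.Reachable v r := by
      rintro v hv
      obtain rfl | hv := mem_insert.1 hv
      · exact ⟨r₀, hr₀, hr₀w.symm.reachable⟩
      · obtain ⟨r, hr, -, hvr⟩ := hreach v hv
        exact ⟨r, hr, hvr⟩
    have :=
      card_le_card_edgeFinset_of_reachable_roots H hR (disjoint_insert_left.2 ⟨hwR, hC⟩) hS
    rwa [card_insert_of_notMem hwC] at this

def colorGraph (G : SimpleGraph V) (c : Sym2 V → ℕ) (k : ℕ) : SimpleGraph V :=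
  G.deleteEdges {e | c e ≠ k}

section colorGraph

variable {G : SimpleGraph V} {c : Sym2 V → ℕ} {k : ℕ}

lemma colorGraph_le : G.colorGraph c k ≤ G := deleteEdges_le _

lemma edgeSet_colorGraph : (G.colorGraph c k).edgeSet = {e ∈ G.edgeSet | c e = k} := by
  ext; simp [colorGraph]

lemma edgeFinset_colorGraph [Fintype G.edgeSet]
    [Fintype (G.colorGraph c k).edgeSet] :
    (G.colorGraph c k).edgeFinset = G.edgeFinset.filter (c · = k) := by
  ext; simp [edgeSet_colorGraph]

end colorGraph

end SimpleGraph

section MCColoring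

open Finset

variable {V : Type*} {G : SimpleGraph V} {c : Sym2 V → ℕ}

lemma IsMCColoring.exists_colorGraph_reachable (hc : IsMCColoring G c) {u v : V} (huv : u ≠ v) :
    ∃ k ∈ c '' G.edgeSet, (G.colorGraph c k).Reachable u v := by
  obtain ⟨p, -, k, hk⟩ := hc u v
  have hp : ∀ e ∈ p.edges, e ∈ (G.colorGraph c k).edgeSet := fun e he => by
    simpa [edgeSet_colorGraph, hk e he] using p.edges_subset_edgeSet he
  refine ⟨k, ?_, ⟨p.transfer _ hp⟩⟩
  cases p with
  | nil => exact absurd rfl huv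
  | cons h q => exact ⟨s(u, _), h, hk _ (by simp)⟩

lemma IsMCColoring.card_image_add_card_le [Fintype V] [DecidableRel G.Adj]
    (hc : IsMCColoring G c) (htf : G.CliqueFree 3) {x y : V} (hxy : G.Adj x y) :
    #(G.edgeFinset.image c) + Fintype.card V ≤ #G.edgeFinset + 2 := by
  classical
  set K := G.edgeFinset.image c
  set D : Finset V := {x, y}ᶜ
  have hcol : ∀ v ∈ D, ∃ k ∈ K, ∃ r ∈ ({x, y} : Finset V),
      ¬ G.Adj v r ∧ (G.colorGraph c k).Reachable v r := by
    intro v hv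
    obtain ⟨r, hr, hvr⟩ : ∃ r ∈ ({x, y} : Finset V), ¬ G.Adj v r := by
      by_contra! h
      exact htf {x, y, v} <|
        is3Clique_triple_iff.2 ⟨hxy, (h x (by simp)).symm, (h y (by simp)).symm⟩
    obtain ⟨k, hk, hreach⟩ :=
      hc.exists_colorGraph_reachable fun h : v = r => mem_compl.1 hv (h ▸ hr)
    exact ⟨k, by simpa [K] using hk, r, hr, hvr, hreach⟩
  choose! col hcolK hcol using hcol
  have hclass : ∀ k ∈ K, #(D.filter (col · = k)) + 1 ≤ #(G.colorGraph c k).edgeFinset := by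
    intro k hk
    refine card_add_one_le_card_edgeFinset_of_reachable_nonadj colorGraph_le ?_ hxy.ne
      (disjoint_of_subset_left (filter_subset _ _) disjoint_compl_left) fun v hv => ?_
    · obtain ⟨e, he, rfl⟩ := mem_image.1 hk
      exact ⟨e, by simpa [edgeSet_colorGraph] using he⟩
    · obtain ⟨hvD, rfl⟩ := mem_filter.1 hv
      exact hcol v hvD
  have hD : #D + 2 = Fintype.card V := by
    rw [card_compl, card_pair hxy.ne]
    have : 2 ≤ Fintype.card V := card_pair hxy.ne ▸ card_le_univ _
    omega
  calc #K + Fintype.card V = ∑ k ∈ K, (#(D.filter (col · = k)) + 1) + 2 := by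
        rw [sum_add_distrib, ← card_eq_sum_card_fiberwise hcolK, sum_const, smul_eq_mul,
          mul_one, ← hD]
        ring
    _ ≤ ∑ k ∈ K, #(G.colorGraph c k).edgeFinset + 2 := by gcongr with k hk; exact hclass k hk
    _ = #G.edgeFinset + 2 := by
        simp only [edgeFinset_colorGraph]
        rw [← card_eq_sum_card_fiberwise fun e he => mem_image_of_mem c he]

lemma isMCColoring_of_connected_of_forall_edgeSet_eq {T : SimpleGraph V} (hTG : T ≤ G)
    (hT : T.Connected) {k : ℕ} (hc : ∀ e ∈ T.edgeSet, c e = k) : IsMCColoring G c := by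
  intro u v
  obtain ⟨p, hp⟩ := hT.exists_isPath u v
  refine ⟨p.mapLe hTG, hp.mapLe hTG, k, fun e he => hc e (p.edges_subset_edgeSet ?_)⟩
  rwa [Walk.edges_mapLe_eq_edges] at he

lemma SimpleGraph.Connected.exists_isMCColoring_card_image_add_card_eq [Fintype V]
    [DecidableRel G.Adj] (hG : G.Connected) (hV : 1 < Fintype.card V) :
    ∃ c : Sym2 V → ℕ, IsMCColoring G c ∧
      #(G.edgeFinset.image c) + Fintype.card V = #G.edgeFinset + 2 := by
  classical
  obtain ⟨T, hTG, hT⟩ := hG.exists_isTree_le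
  obtain ⟨ι, hι⟩ := Countable.exists_injective_nat (Sym2 V)
  set c : Sym2 V → ℕ := fun e => if e ∈ T.edgeSet then 0 else ι e + 1
  have hTsub : T.edgeFinset ⊆ G.edgeFinset := edgeFinset_subset_edgeFinset.2 hTG
  have hTcard := hT.card_edgeFinset
  have hT_image : T.edgeFinset.image c = {0} := by
    rw [image_congr fun e he => if_pos (mem_edgeFinset.1 he)]
    exact image_const (card_pos.1 (by omega)) 0
  have hrest_inj : Set.InjOn c ↑(G.edgeFinset \ T.edgeFinset) := fun e he e' he' h => by
    simp only [coe_sdiff, Set.mem_sdiff, mem_coe, mem_edgeFinset] at he he'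
    simpa [c, he.2, he'.2, hι.eq_iff] using h
  have hdisj : Disjoint {0} ((G.edgeFinset \ T.edgeFinset).image c) := by
    simp +contextual [c]
  refine ⟨c, isMCColoring_of_connected_of_forall_edgeSet_eq hTG hT.connected
    fun e he => if_pos he, ?_⟩
  rw [← union_sdiff_of_subset hTsub, image_union, hT_image, card_union_of_disjoint hdisj,
    card_singleton, card_image_of_injOn hrest_inj, card_union_of_disjoint disjoint_sdiff]
  omega

lemma ncard_image_edgeSet [Fintype V] [DecidableRel G.Adj] (c : Sym2 V → ℕ) :
    (c '' G.edgeSet).ncard = #(G.edgeFinset.image c) := by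
  rw [← coe_edgeFinset, ← coe_image, Set.ncard_coe_finset]

end MCColoring

theorem mc_eq_of_triangle_free_general {V : Type*} [Fintype V]
    (G : SimpleGraph V) [DecidableRel G.Adj] (hG : G.Connected)
    (hn : 3 < Fintype.card V) (htf : G.CliqueFree 3) :
    (mcNum G : ℤ) = (G.edgeFinset.card : ℤ) - (Fintype.card V : ℤ) + 2 := by
  have : Nontrivial V := Fintype.one_lt_card_iff_nontrivial.1 (by omega)
  obtain ⟨x⟩ := hG.nonempty
  obtain ⟨y, hxy⟩ := hG.preconnected.exists_adj_of_nontrivial x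
  obtain ⟨c₀, hc₀, hcard⟩ := hG.exists_isMCColoring_card_image_add_card_eq (by omega)
  have hmc : mcNum G = (G.edgeFinset.image c₀).card := by
    refine IsGreatest.csSup_eq ⟨⟨c₀, hc₀, ncard_image_edgeSet c₀⟩, ?_⟩
    rintro _ ⟨c, hc, rfl⟩
    have := hc.card_image_add_card_le htf hxy
    rw [ncard_image_edgeSet]
    omega
  omega

/-- If `G` is a connected triangle-free graph with `n > 3` vertices,
then `mc(G) = m - n + 2`. -/
theorem mc_eq_of_triangle_free {V : Type*} [Fintype V] [DecidableEq V]
    (G : SimpleGraph V) [DecidableRel G.Adj] (hG : G.Connected)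
    (hn : 3 < Fintype.card V) (htf : G.CliqueFree 3) :
    (mcNum G : ℤ) = (G.edgeFinset.card : ℤ) - (Fintype.card V : ℤ) + 2 :=
  mc_eq_of_triangle_free_general G hG hn htf
end

section
/- Let G be a connected simple graph with n > 3 vertices, m edges, and maximum degree Δ(G). If Δ(G) ≤ n − 2m/n, then mc(G) = m − n + 2. -/
open SimpleGraph Filter Real

/-!
Fix an MC-coloring with `t` colors. A monochromatic component (a connected component of one
color class) with `k` vertices carries at least `k - 1` edges, and every color has a component,
so `t + ∑ (|C| - 2) ≤ m`. A non-adjacent pair `u, v` is joined by a monochromatic path through a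
third vertex, so the components with at least three vertices cover all non-edges; each of them
spans a connected subgraph and hence contains at most `(|C| - 1)(|C| - 2)` ordered non-adjacent
pairs. The degree condition gives every vertex at least `2m/n - 1` non-neighbours. Counting
non-adjacent pairs in total, and at the vertices outside a largest component, forces
`∑ (|C| - 2) ≥ n - 2`, so `t ≤ m - n + 2`. Coloring a spanning tree with one color and the other
edges with distinct colors attains the bound.
-/

open Finset

/- The inequalities satisfied by a family of vertex sets covering the non-edges: `a` is the size of
a largest set and, over the remaining sets, `y = ∑ (|S| - 2)`, `R` is their number and
`P = ∑ (|S| - 1)(|S| - 2)`. -/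
theorem le_add_of_cover_inequalities {n m a y R P : ℤ}
    (hn : 4 ≤ n) (ha : 3 ≤ a) (hRy : R ≤ y) (hR : 0 ≤ R)
    (hcover : n ≤ a + y + 2 * R)
    (hm : 4 * m ≤ n ^ 2)
    (hout : (n - a) * (2 * m - n) ≤ n * (P + 2 * (y + R)))
    (hnonadj : n * (n - 1) - 2 * m ≤ (a - 1) * (a - 2) + P)
    (hPa : P ≤ y * (a - 1)) (hPy : P ≤ y * (y - R + 2)) :
    n ≤ a + y := by
  by_contra! hwaste
  -- If the largest set is small, counting all non-adjacent pairs is already contradictory;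
  -- otherwise the `b = n - a` vertices outside it have too many non-neighbours.
  rcases le_or_gt (2 * a - 3) n with hsmall | hlarge
  · have h1 : (a - 1) * (a - 2 + y) ≤ (a - 1) * (n - 3) :=
      mul_le_mul_of_nonneg_left (by omega) (by omega)
    have h2 : 2 * (a - 1) * (n - 3) ≤ (n + 1) * (n - 3) :=
      mul_le_mul_of_nonneg_right (by omega) (by omega)
    linarith
  obtain ⟨b, rfl⟩ : ∃ b, a = n - b := ⟨n - a, by ring⟩
  have hyb : y ≤ b - 1 := by omega
  have hR1 : 1 ≤ R := by omega
  have hbn : 0 ≤ (n + b) * (b - 1) := mul_nonneg (by omega) (by omega)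
  have hP : (n + b) * P ≤ (n + b) * ((b - 1) * (y - R + 2)) :=
    mul_le_mul_of_nonneg_left
      (hPy.trans (mul_le_mul_of_nonneg_right hyb (by omega))) (by omega)
  have hbm : b * (n * (n - 2) - (n - b - 1) * (n - b - 2) - P) ≤ b * (2 * m - n) :=
    mul_le_mul_of_nonneg_left (by linarith) (by omega)
  have hkey : b * ((2 * b + 1) * n - (b + 1) * (b + 2)) ≤
      (n + b) * ((b - 1) * (b + 1 - R)) + 2 * n * (b - 1 + R) := by
    have := mul_nonneg (by omega : (0:ℤ) ≤ b - 1 - y) (by omega : 0 ≤ (n + b) * (b - 1) + 2 * n)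
    linarith
  rcases le_or_gt b 2 with hb | hb
  · obtain rfl : b = 2 := by omega
    obtain rfl : R = 1 := by omega
    linarith
  · have hR' := mul_nonneg (by omega : (0:ℤ) ≤ R - 1)
      (by nlinarith : (0:ℤ) ≤ (n + b) * (b - 1) - 2 * n)
    have hbb := mul_nonneg (mul_nonneg (by omega : (0:ℤ) ≤ b) (by omega : (0:ℤ) ≤ b))
      (by omega : (0:ℤ) ≤ n - 2 * b - 4)
    have hb1 : 0 < b * (b - 1) := mul_pos (by omega) (by omega)
    linarith

theorem le_add_sum_of_cover_inequalities {ι : Type*} {F : Finset ι} {c : ι → ℤ} {n m a : ℤ}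
    (hn : 4 ≤ n) (ha : 3 ≤ a) (hc : ∀ i ∈ F, 3 ≤ c i ∧ c i ≤ a)
    (hcover : n ≤ a + ∑ i ∈ F, c i) (hm : 4 * m ≤ n ^ 2)
    (hout : (n - a) * (2 * m - n) ≤ n * ∑ i ∈ F, c i * (c i - 1))
    (hnonadj : n * (n - 1) - 2 * m ≤ (a - 1) * (a - 2) + ∑ i ∈ F, (c i - 1) * (c i - 2)) :
    n ≤ a + ∑ i ∈ F, (c i - 2) := by
  classical
  set y := ∑ i ∈ F, (c i - 2)
  set R : ℤ := (#F : ℤ)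
  have hRy : R ≤ y := by
    have := card_nsmul_le_sum F (fun i => c i - 2) 1 fun i hi => by linarith [hc i hi]
    rwa [nsmul_eq_mul, mul_one] at this
  have hsum : ∑ i ∈ F, c i = y + 2 * R := by
    simp only [y, R, sum_sub_distrib, sum_const, nsmul_eq_mul]
    ring
  have hsum_sq : ∑ i ∈ F, c i * (c i - 1) = ∑ i ∈ F, (c i - 1) * (c i - 2) + 2 * (y + R) := by
    have hexpand : ∀ i, c i * (c i - 1) = (c i - 1) * (c i - 2) + (2 * (c i - 2) + 2) :=
      fun i => by ring
    simp only [hexpand, sum_add_distrib, ← mul_sum, sum_const, nsmul_eq_mul, y, R]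
    ring
  have hPa : ∑ i ∈ F, (c i - 1) * (c i - 2) ≤ y * (a - 1) := by
    rw [sum_mul]
    exact sum_le_sum fun i hi => by nlinarith [hc i hi]
  have hPy : ∑ i ∈ F, (c i - 1) * (c i - 2) ≤ y * (y - R + 2) := by
    rw [sum_mul]
    refine sum_le_sum fun i hi => ?_
    have hrest : R - 1 ≤ y - (c i - 2) := by
      have := card_nsmul_le_sum (F.erase i) (fun i => c i - 2) 1
        fun j hj => by linarith [hc j (mem_of_mem_erase hj)]
      rw [nsmul_eq_mul, mul_one, card_erase_of_mem hi, Nat.cast_pred (card_pos.2 ⟨i, hi⟩)] at this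
      linarith [add_sum_erase F (fun i => c i - 2) hi]
    nlinarith [hc i hi]
  rw [hsum_sq] at hout
  exact le_add_of_cover_inequalities hn ha hRy (by positivity) (by linarith) hm hout hnonadj hPa hPy

theorem card_le_sum_card_of_forall_exists_mem {V ι : Type*} [Fintype V] {B : Finset ι}
    {S : ι → Finset V} (hcov : ∀ v, ∃ i ∈ B, v ∈ S i) :
    Fintype.card V ≤ ∑ i ∈ B, #(S i) := by
  classical
  calc Fintype.card V = #(univ : Finset V) := card_univ.symm
    _ ≤ #(B.biUnion S) := card_le_card fun v _ => by simpa using hcov v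
    _ ≤ _ := card_biUnion_le

theorem Int.natCast_mul_sub_one (t : ℕ) : ((t * (t - 1) : ℕ) : ℤ) = t * (t - 1) := by
  rcases t with _ | t <;> simp

namespace SimpleGraph

section Counting

variable {V : Type*}

theorem two_mul_card_sub_one_le_card_adj (H : SimpleGraph V) [DecidableRel H.Adj]
    {s : Finset V} (hs : (H.induce (s : Set V)).Connected) :
    2 * (#s - 1) ≤ #{q ∈ s ×ˢ s | H.Adj q.1 q.2} := by
  have hvert := hs.card_vert_le_card_edgeSet_add_one
  rw [Nat.card_coe_set_eq, Set.ncard_coe_finset, Nat.card_eq_fintype_card,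
    ← edgeFinset_card] at hvert
  calc 2 * (#s - 1) ≤ 2 * #(H.induce (s : Set V)).edgeFinset := by omega
    _ = #((univ : Finset (↥(s : Set V) × ↥(s : Set V))).filter
          fun q => (H.induce (s : Set V)).Adj q.1 q.2) :=
      two_mul_card_edgeFinset _
    _ ≤ _ := by
      refine card_le_card_of_injOn (fun q => (q.1.1, q.2.1)) (fun q hq => by simpa using hq) ?_
      intro q _ r _ h
      simp only [Prod.mk.injEq] at h
      exact Prod.ext (Subtype.ext h.1) (Subtype.ext h.2)

variable [DecidableEq V] (G : SimpleGraph V) [DecidableRel G.Adj]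

theorem card_compl_adj_le_of_connected_induce {s : Finset V}
    (hs : (G.induce (s : Set V)).Connected) :
    (#{q ∈ s ×ˢ s | Gᶜ.Adj q.1 q.2} : ℤ) ≤ (#s - 1) * (#s - 2) := by
  have hadj := G.two_mul_card_sub_one_le_card_adj hs
  have hsplit := card_filter_add_card_filter_not (s := s.offDiag) (fun q => G.Adj q.1 q.2)
  have hcompl : {q ∈ s.offDiag | ¬G.Adj q.1 q.2} = {q ∈ s ×ˢ s | Gᶜ.Adj q.1 q.2} := by
    ext q
    simp only [mem_filter, mem_offDiag, mem_product, compl_adj]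
    tauto
  have hG : {q ∈ s.offDiag | G.Adj q.1 q.2} = {q ∈ s ×ˢ s | G.Adj q.1 q.2} := by
    ext q
    simp only [mem_filter, mem_offDiag, mem_product]
    exact ⟨fun h => ⟨⟨h.1.1, h.1.2.1⟩, h.2⟩, fun h => ⟨⟨h.1.1, h.1.2, h.2.ne⟩, h.2⟩⟩
  rw [hcompl, hG, offDiag_card] at hsplit
  have hne : 1 ≤ #s := card_pos.2 <| by
    obtain ⟨⟨v, hv⟩⟩ := hs.nonempty
    exact ⟨v, hv⟩
  zify [hne, Nat.le_mul_self #s] at hadj hsplit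
  linarith

variable [Fintype V]

theorem sum_degree_compl_add_two_mul_card_edgeFinset :
    ∑ v, Gᶜ.degree v + 2 * #G.edgeFinset = Fintype.card V * (Fintype.card V - 1) := by
  rw [← sum_degrees_eq_twice_card_edges, ← sum_add_distrib]
  have h : ∀ v, Gᶜ.degree v + G.degree v = Fintype.card V - 1 := fun v => by
    have := G.degree_lt_card_verts v
    rw [degree_compl]
    omega
  simp [h]

theorem two_mul_card_edgeFinset_le_of_maxDegree_le
    (hΔ : (G.maxDegree : ℝ) ≤
      (Fintype.card V : ℝ) - 2 * (G.edgeFinset.card : ℝ) / (Fintype.card V : ℝ))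
    (v : V) : 2 * #G.edgeFinset ≤ Fintype.card V * (Gᶜ.degree v + 1) := by
  have hdv := G.degree_lt_card_verts v
  have hreal : (Fintype.card V : ℝ) * G.degree v + 2 * #G.edgeFinset ≤
      Fintype.card V * Fintype.card V := by
    have hd : (G.degree v : ℝ) ≤ G.maxDegree := by exact_mod_cast G.degree_le_maxDegree v
    have hpos : (0 : ℝ) < Fintype.card V := by exact_mod_cast (Nat.zero_le _).trans_lt hdv
    calc (Fintype.card V : ℝ) * G.degree v + 2 * #G.edgeFinset
        ≤ Fintype.card V * (Fintype.card V - 2 * #G.edgeFinset / Fintype.card V) +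
          2 * #G.edgeFinset := by gcongr; exact hd.trans hΔ
      _ = Fintype.card V * Fintype.card V := by field_simp; ring
  have hnat : Fintype.card V * G.degree v + 2 * #G.edgeFinset ≤
      Fintype.card V * Fintype.card V := by exact_mod_cast hreal
  rw [degree_compl, show Fintype.card V - 1 - G.degree v + 1 = Fintype.card V - G.degree v by
    omega, Nat.mul_sub]
  omega

theorem degree_compl_pos (hG : G.Connected) (hn : 3 ≤ Fintype.card V) {v : V}
    (hdeg : 2 * #G.edgeFinset ≤ Fintype.card V * (Gᶜ.degree v + 1)) : 0 < Gᶜ.degree v := by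
  have hm := hG.card_vert_le_card_edgeSet_add_one
  rw [Nat.card_eq_fintype_card, Nat.card_eq_fintype_card, ← edgeFinset_card] at hm
  by_contra! h
  rw [Nat.le_zero.1 h] at hdeg
  omega

theorem four_mul_card_edgeFinset_le_sq [Nonempty V]
    (hdeg : ∀ v, 2 * #G.edgeFinset ≤ Fintype.card V * (Gᶜ.degree v + 1)) :
    4 * #G.edgeFinset ≤ Fintype.card V ^ 2 := by
  have hsum := G.sum_degree_compl_add_two_mul_card_edgeFinset
  have h := sum_le_sum fun v (_ : v ∈ univ) => hdeg v
  rw [sum_const, card_univ, smul_eq_mul, ← mul_sum, sum_add_distrib, sum_const, card_univ,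
    smul_eq_mul, mul_one] at h
  have h2m := Nat.le_of_mul_le_mul_left h Fintype.card_pos
  have hsq : ∀ t : ℕ, t * (t - 1) + t = t ^ 2 := by
    rintro (_ | t)
    · rfl
    · rw [Nat.add_sub_cancel]
      ring
  have := hsq (Fintype.card V)
  omega

end Counting

section Cover

variable {V ι : Type*} [Fintype V] [DecidableEq V] (G : SimpleGraph V) [DecidableRel G.Adj]
  (B : Finset ι) (S : ι → Finset V)

theorem degree_compl_le_sum (v : V) (hv : ∀ u, Gᶜ.Adj v u → ∃ i ∈ B, v ∈ S i ∧ u ∈ S i) :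
    Gᶜ.degree v ≤ ∑ i ∈ B with v ∈ S i, (#(S i) - 1) := by
  calc Gᶜ.degree v = #(Gᶜ.neighborFinset v) := (card_neighborFinset_eq_degree _ _).symm
    _ ≤ #({i ∈ B | v ∈ S i}.biUnion fun i => (S i).erase v) := by
      refine card_le_card fun u hu => ?_
      rw [mem_neighborFinset] at hu
      obtain ⟨i, hi, hvi, hui⟩ := hv u hu
      exact mem_biUnion.2 ⟨i, mem_filter.2 ⟨hi, hvi⟩, mem_erase.2 ⟨hu.ne.symm, hui⟩⟩
    _ ≤ ∑ i ∈ B with v ∈ S i, #((S i).erase v) := card_biUnion_le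
    _ = ∑ i ∈ B with v ∈ S i, (#(S i) - 1) :=
      sum_congr rfl fun i hi => card_erase_of_mem (mem_filter.1 hi).2

theorem sum_degree_compl_le (W : Finset V)
    (hW : ∀ v ∈ W, ∀ u, Gᶜ.Adj v u → ∃ i ∈ B, v ∈ S i ∧ u ∈ S i) :
    ∑ v ∈ W, Gᶜ.degree v ≤ ∑ i ∈ B, #(S i) * (#(S i) - 1) := by
  calc ∑ v ∈ W, Gᶜ.degree v ≤ ∑ v ∈ W, ∑ i ∈ B with v ∈ S i, (#(S i) - 1) :=
        sum_le_sum fun v hv => G.degree_compl_le_sum B S v (hW v hv)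
    _ = ∑ i ∈ B, ∑ v ∈ W with v ∈ S i, (#(S i) - 1) :=
        sum_comm' fun v i => by simp only [mem_filter]; tauto
    _ ≤ ∑ i ∈ B, #(S i) * (#(S i) - 1) := by
        refine sum_le_sum fun i _ => ?_
        rw [sum_const, smul_eq_mul]
        exact Nat.mul_le_mul_right _ (card_le_card fun v hv => (mem_filter.1 hv).2)

theorem sum_degree_compl_le_sum_card_compl_adj
    (hcover : ∀ u v, Gᶜ.Adj u v → ∃ i ∈ B, u ∈ S i ∧ v ∈ S i) :
    ∑ v, Gᶜ.degree v ≤ ∑ i ∈ B, #{q ∈ S i ×ˢ S i | Gᶜ.Adj q.1 q.2} := by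
  rw [sum_degrees_eq_twice_card_edges, two_mul_card_edgeFinset]
  refine (card_le_card fun q hq => ?_).trans card_biUnion_le
  obtain ⟨i, hi, h1, h2⟩ := hcover q.1 q.2 (mem_filter.1 hq).2
  exact mem_biUnion.2 ⟨i, hi, mem_filter.2 ⟨mem_product.2 ⟨h1, h2⟩, (mem_filter.1 hq).2⟩⟩

theorem mul_sub_one_sub_two_mul_card_edgeFinset_le_sum
    (hconn : ∀ i ∈ B, (G.induce (S i : Set V)).Connected)
    (hcover : ∀ u v, Gᶜ.Adj u v → ∃ i ∈ B, u ∈ S i ∧ v ∈ S i) :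
    (Fintype.card V : ℤ) * (Fintype.card V - 1) - 2 * #G.edgeFinset ≤
      ∑ i ∈ B, ((#(S i) : ℤ) - 1) * (#(S i) - 2) := by
  have hsum := congrArg (Nat.cast : ℕ → ℤ) G.sum_degree_compl_add_two_mul_card_edgeFinset
  have hle : ((∑ v, Gᶜ.degree v : ℕ) : ℤ) ≤ ∑ i ∈ B, (#{q ∈ S i ×ˢ S i | Gᶜ.Adj q.1 q.2} : ℤ) := by
    exact_mod_cast G.sum_degree_compl_le_sum_card_compl_adj B S hcover
  have hsets := sum_le_sum fun i hi => G.card_compl_adj_le_of_connected_induce (hconn i hi)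
  rw [Nat.cast_add, Int.natCast_mul_sub_one] at hsum
  push_cast at hsum hle
  linarith

theorem card_mul_two_mul_card_edgeFinset_sub_card_le (W : Finset V)
    (hdeg : ∀ v, 2 * #G.edgeFinset ≤ Fintype.card V * (Gᶜ.degree v + 1))
    (hW : ∀ v ∈ W, ∀ u, Gᶜ.Adj v u → ∃ i ∈ B, v ∈ S i ∧ u ∈ S i) :
    (#W : ℤ) * (2 * #G.edgeFinset - Fintype.card V) ≤
      Fintype.card V * ∑ i ∈ B, (#(S i) : ℤ) * (#(S i) - 1) := by
  have hle : ((∑ v ∈ W, Gᶜ.degree v : ℕ) : ℤ) ≤ ∑ i ∈ B, (#(S i) : ℤ) * (#(S i) - 1) := by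
    simp only [← Int.natCast_mul_sub_one, ← Nat.cast_sum]
    exact_mod_cast G.sum_degree_compl_le B S W hW
  calc (#W : ℤ) * (2 * #G.edgeFinset - Fintype.card V)
      = ∑ v ∈ W, (2 * (#G.edgeFinset : ℤ) - Fintype.card V) := by
        rw [sum_const, nsmul_eq_mul]
    _ ≤ ∑ v ∈ W, (Fintype.card V : ℤ) * Gᶜ.degree v := sum_le_sum fun v _ => by
        have h : ((2 * #G.edgeFinset : ℕ) : ℤ) ≤ (Fintype.card V * (Gᶜ.degree v + 1) : ℕ) :=
          Nat.cast_le.2 (hdeg v)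
        push_cast at h
        linarith
    _ ≤ Fintype.card V * ∑ i ∈ B, (#(S i) : ℤ) * (#(S i) - 1) := by
        rw [← mul_sum]
        exact mul_le_mul_of_nonneg_left (by exact_mod_cast hle) (by positivity)

theorem card_le_sum_card_sub_two_add_two (hG : G.Connected) (hn : 4 ≤ Fintype.card V)
    (hdeg : ∀ v, 2 * #G.edgeFinset ≤ Fintype.card V * (Gᶜ.degree v + 1))
    (hS : ∀ i ∈ B, 3 ≤ #(S i)) (hconn : ∀ i ∈ B, (G.induce (S i : Set V)).Connected)
    (hcover : ∀ u v, Gᶜ.Adj u v → ∃ i ∈ B, u ∈ S i ∧ v ∈ S i) :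
    (Fintype.card V : ℤ) ≤ ∑ i ∈ B, ((#(S i) : ℤ) - 2) + 2 := by
  classical
  have hcov : ∀ v, ∃ i ∈ B, v ∈ S i := fun v => by
    obtain ⟨u, hu⟩ := card_pos.1 ((G.degree_compl_pos hG (by omega) (hdeg v)).trans_eq
      (card_neighborFinset_eq_degree _ _).symm)
    obtain ⟨i, hi, hv, -⟩ := hcover v u ((mem_neighborFinset _ _ _).1 hu)
    exact ⟨i, hi, hv⟩
  have : Nonempty V := Fintype.card_pos_iff.1 (by omega)
  obtain ⟨A, hA, hAmax⟩ := B.exists_max_image (fun i => #(S i))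
    (let ⟨i, hi, _⟩ := hcov (Classical.arbitrary V); ⟨i, hi⟩)
  have hsplit (f : ι → ℤ) : ∑ i ∈ B, f i = f A + ∑ i ∈ B.erase A, f i :=
    (add_sum_erase B f hA).symm
  have hvert := card_le_sum_card_of_forall_exists_mem hcov
  zify at hvert
  have hnonadj := G.mul_sub_one_sub_two_mul_card_edgeFinset_le_sum B S hconn hcover
  have hout := G.card_mul_two_mul_card_edgeFinset_sub_card_le (B.erase A) S (univ \ S A) hdeg
    fun v hv u huv => by
      obtain ⟨i, hi, hvi, hui⟩ := hcover v u huv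
      refine ⟨i, mem_erase.2 ⟨?_, hi⟩, hvi, hui⟩
      rintro rfl
      exact (mem_sdiff.1 hv).2 hvi
  rw [card_sdiff_of_subset (subset_univ _), card_univ, Nat.cast_sub (card_le_univ _)] at hout
  rw [hsplit] at hvert hnonadj ⊢
  have := le_add_sum_of_cover_inequalities (F := B.erase A) (c := fun i => (#(S i) : ℤ)) (by omega)
    (by exact_mod_cast hS A hA)
    (fun i hi => ⟨by exact_mod_cast hS i (mem_of_mem_erase hi),
      by exact_mod_cast hAmax i (mem_of_mem_erase hi)⟩)
    hvert (by exact_mod_cast G.four_mul_card_edgeFinset_le_sq hdeg) hout hnonadj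
  linarith

end Cover

section Components

variable {V : Type*} [Fintype V]

open Classical in
noncomputable def reachableFinset (H : SimpleGraph V) (v : V) : Finset V := {w | H.Reachable v w}

theorem mem_reachableFinset {H : SimpleGraph V} {v w : V} :
    w ∈ H.reachableFinset v ↔ H.Reachable v w := by
  simp [reachableFinset]

theorem reachableFinset_eq_of_mem {H : SimpleGraph V} {v w : V} (h : w ∈ H.reachableFinset v) :
    H.reachableFinset w = H.reachableFinset v := by
  ext x
  simp only [mem_reachableFinset] at h ⊢
  exact ⟨h.trans, h.symm.trans⟩

theorem connected_induce_reachableFinset (H : SimpleGraph V) (v : V) :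
    (H.induce (H.reachableFinset v : Set V)).Connected := by
  have : (H.reachableFinset v : Set V) = (H.connectedComponentMk v).supp := by
    ext w
    simp [mem_reachableFinset, ConnectedComponent.eq, reachable_comm]
  rw [this]
  exact (H.connectedComponentMk v).connected_toSimpleGraph

end Components

section Monochromatic

variable {V : Type*} (G : SimpleGraph V) (c : Sym2 V → ℕ)

def colorClass (k : ℕ) : SimpleGraph V where
  Adj u v := G.Adj u v ∧ c s(u, v) = k
  symm := ⟨fun _ _ h => ⟨h.1.symm, Sym2.eq_swap ▸ h.2⟩⟩
  loopless := ⟨fun _ h => G.irrefl h.1⟩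

theorem colorClass_le (k : ℕ) : G.colorClass c k ≤ G := fun _ _ h => h.1

variable {G c} in
theorem mem_edgeSet_colorClass {k : ℕ} {e : Sym2 V} :
    e ∈ (G.colorClass c k).edgeSet ↔ e ∈ G.edgeSet ∧ c e = k := by
  induction e using Sym2.ind with
  | _ u v => rfl

variable [Fintype V] [DecidableEq V] [DecidableRel G.Adj]

/-- Tagging with the color keeps components of different colors on the same vertex set apart. -/
noncomputable def monoComponent (q : V × V) : ℕ × Finset V :=
  (c s(q.1, q.2), (G.colorClass c (c s(q.1, q.2))).reachableFinset q.1)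

noncomputable def monoComponents : Finset (ℕ × Finset V) :=
  ({q : V × V | G.Adj q.1 q.2} : Finset (V × V)).image (G.monoComponent c)

variable {G c}

theorem exists_of_mem_monoComponents {p : ℕ × Finset V} (hp : p ∈ G.monoComponents c) :
    ∃ u v, G.Adj u v ∧ c s(u, v) = p.1 ∧ p.2 = (G.colorClass c p.1).reachableFinset u := by
  obtain ⟨⟨u, v⟩, huv, rfl⟩ := mem_image.1 hp
  exact ⟨u, v, (mem_filter.1 huv).2, rfl, rfl⟩

theorem connected_induce_colorClass_of_mem_monoComponents {p : ℕ × Finset V}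
    (hp : p ∈ G.monoComponents c) : ((G.colorClass c p.1).induce (p.2 : Set V)).Connected := by
  obtain ⟨u, -, -, -, hu⟩ := exists_of_mem_monoComponents hp
  rw [hu]
  exact connected_induce_reachableFinset _ u

theorem connected_induce_of_mem_monoComponents {p : ℕ × Finset V}
    (hp : p ∈ G.monoComponents c) : (G.induce (p.2 : Set V)).Connected :=
  (connected_induce_colorClass_of_mem_monoComponents hp).mono
    (comap_monotone _ (G.colorClass_le c p.1))

theorem two_le_card_of_mem_monoComponents {p : ℕ × Finset V} (hp : p ∈ G.monoComponents c) :
    2 ≤ #p.2 := by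
  obtain ⟨u, v, huv, hc, hu⟩ := exists_of_mem_monoComponents hp
  rw [hu]
  exact one_lt_card.2 ⟨u, mem_reachableFinset.2 (Reachable.refl u), v,
    mem_reachableFinset.2 (Adj.reachable (⟨huv, hc⟩ : (G.colorClass c p.1).Adj u v)), huv.ne⟩

theorem card_image_le_card_monoComponents :
    #(G.edgeFinset.image c) ≤ #(G.monoComponents c) := by
  refine card_le_card_of_surjOn Prod.fst fun k hk => ?_
  obtain ⟨e, he, rfl⟩ := mem_image.1 hk
  induction e using Sym2.ind with
  | _ u v =>
    exact ⟨G.monoComponent c (u, v),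
      mem_image_of_mem _ (mem_filter.2 ⟨mem_univ _, (mem_edgeFinset.1 he)⟩), rfl⟩

theorem sum_card_sub_one_le_card_edgeFinset :
    ∑ p ∈ G.monoComponents c, (#p.2 - 1) ≤ #G.edgeFinset := by
  classical
  have hfib := card_eq_sum_card_fiberwise (s := {q : V × V | G.Adj q.1 q.2})
    (t := G.monoComponents c)
    (fun q hq => mem_image_of_mem (G.monoComponent c) hq)
  rw [← two_mul_card_edgeFinset] at hfib
  suffices h : ∀ p ∈ G.monoComponents c,
      2 * (#p.2 - 1) ≤ #{q ∈ {q : V × V | G.Adj q.1 q.2} | G.monoComponent c q = p} by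
    have := sum_le_sum h
    rw [← mul_sum, ← hfib] at this
    omega
  intro p hp
  refine ((G.colorClass c p.1).two_mul_card_sub_one_le_card_adj
    (connected_induce_colorClass_of_mem_monoComponents hp)).trans (card_le_card fun q hq => ?_)
  obtain ⟨hq, hadj, hcol⟩ := mem_filter.1 hq
  obtain ⟨u, v, -, -, hu⟩ := exists_of_mem_monoComponents hp
  refine mem_filter.2 ⟨mem_filter.2 ⟨mem_univ _, hadj⟩, ?_⟩
  rw [monoComponent, hcol, reachableFinset_eq_of_mem (hu ▸ (mem_product.1 hq).1), ← hu]

theorem exists_mem_monoComponents_of_compl_adj (hc : IsMCColoring G c) {u v : V}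
    (huv : Gᶜ.Adj u v) : ∃ p ∈ G.monoComponents c, 3 ≤ #p.2 ∧ u ∈ p.2 ∧ v ∈ p.2 := by
  obtain ⟨w, -, k, hk⟩ := hc u v
  cases w with
  | nil => exact absurd rfl huv.ne
  | @cons _ x _ hux w' =>
    have hreach : (G.colorClass c k).Reachable u v :=
      ⟨(Walk.cons hux w').transfer _ fun e he =>
        mem_edgeSet_colorClass.2 ⟨Walk.edges_subset_edgeSet _ he, hk e he⟩⟩
    have hkx : c s(u, x) = k := hk _ (by simp)
    have hxv : x ≠ v := by
      rintro rfl
      exact ((compl_adj G u x).1 huv).2 hux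
    refine ⟨G.monoComponent c (u, x), mem_image_of_mem _ (by simpa using hux), ?_⟩
    simp only [monoComponent, hkx, mem_reachableFinset]
    refine ⟨two_lt_card.2 ⟨u, ?_, x, ?_, v, ?_, hux.ne, huv.ne, hxv⟩, Reachable.refl u, hreach⟩
    · exact mem_reachableFinset.2 (Reachable.refl u)
    · exact mem_reachableFinset.2 (Adj.reachable ⟨hux, hkx⟩)
    · exact mem_reachableFinset.2 hreach

theorem card_image_add_sum_card_sub_two_le :
    (#(G.edgeFinset.image c) : ℤ) + ∑ p ∈ G.monoComponents c, ((#p.2 : ℤ) - 2) ≤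
      #G.edgeFinset := by
  have hcomps : (#(G.edgeFinset.image c) : ℤ) ≤ #(G.monoComponents c) := by
    exact_mod_cast card_image_le_card_monoComponents
  have hedges : ∑ p ∈ G.monoComponents c, ((#p.2 : ℤ) - 1) ≤ #G.edgeFinset := by
    have := Nat.cast_le (α := ℤ).2 (sum_card_sub_one_le_card_edgeFinset (G := G) (c := c))
    rwa [Nat.cast_sum, sum_congr rfl fun p hp =>
      Nat.cast_pred (Nat.lt_of_succ_lt (two_le_card_of_mem_monoComponents hp))] at this
  have hsplit : ∑ p ∈ G.monoComponents c, ((#p.2 : ℤ) - 2) =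
      ∑ p ∈ G.monoComponents c, ((#p.2 : ℤ) - 1) - #(G.monoComponents c) := by
    rw [← nsmul_one, ← sum_const, ← sum_sub_distrib]
    exact sum_congr rfl fun p _ => by ring
  linarith

theorem card_image_add_card_le_of_isMCColoring (hG : G.Connected) (hn : 4 ≤ Fintype.card V)
    (hdeg : ∀ v, 2 * #G.edgeFinset ≤ Fintype.card V * (Gᶜ.degree v + 1))
    (hc : IsMCColoring G c) : #(G.edgeFinset.image c) + Fintype.card V ≤ #G.edgeFinset + 2 := by
  have hB := G.card_le_sum_card_sub_two_add_two ((G.monoComponents c).filter (3 ≤ #·.2))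
    Prod.snd hG hn hdeg (fun p hp => (mem_filter.1 hp).2)
    (fun p hp => connected_induce_of_mem_monoComponents (mem_filter.1 hp).1)
    fun u v huv => by
      obtain ⟨p, hp, h3, hu, hv⟩ := exists_mem_monoComponents_of_compl_adj hc huv
      exact ⟨p, mem_filter.2 ⟨hp, h3⟩, hu, hv⟩
  have hsub : ∑ p ∈ (G.monoComponents c).filter (3 ≤ #·.2), ((#p.2 : ℤ) - 2) ≤
      ∑ p ∈ G.monoComponents c, ((#p.2 : ℤ) - 2) :=
    sum_le_sum_of_subset_of_nonneg (filter_subset _ _) fun p hp _ => by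
      have := two_le_card_of_mem_monoComponents hp
      omega
  have := card_image_add_sum_card_sub_two_le (G := G) (c := c)
  omega

end Monochromatic

section LowerBound

variable {V : Type*} [Fintype V] {G : SimpleGraph V} [DecidableRel G.Adj]

theorem exists_isMCColoring_card_image_add_card_eq (hG : G.Connected)
    (hn : 2 ≤ Fintype.card V) :
    ∃ c : Sym2 V → ℕ, IsMCColoring G c ∧
      #(G.edgeFinset.image c) + Fintype.card V = #G.edgeFinset + 2 := by
  classical
  obtain ⟨T, hTG, hT⟩ := hG.exists_isTree_le
  have hTcard := hT.card_edgeFinset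
  have hTsub : T.edgeFinset ⊆ G.edgeFinset := edgeFinset_subset_edgeFinset.2 hTG
  let c : Sym2 V → ℕ := fun e => if e ∈ T.edgeSet then 0 else Fintype.equivFin (Sym2 V) e + 1
  refine ⟨c, fun u v => ?_, ?_⟩
  · obtain ⟨p, hp, -⟩ := hT.existsUnique_path u v
    refine ⟨p.mapLe hTG, hp.mapLe hTG, 0, fun e he => ?_⟩
    rw [Walk.edges_mapLe_eq_edges] at he
    simp [c, p.edges_subset_edgeSet he]
  · have himage : G.edgeFinset.image c = insert 0 ((G.edgeFinset \ T.edgeFinset).image c) := by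
      ext k
      constructor
      · rintro hk
        obtain ⟨e, he, rfl⟩ := mem_image.1 hk
        by_cases heT : e ∈ T.edgeFinset
        · simp [c, mem_edgeFinset.1 heT]
        · exact mem_insert_of_mem (mem_image_of_mem c (mem_sdiff.2 ⟨he, heT⟩))
      · rintro hk
        rcases mem_insert.1 hk with rfl | hk
        · obtain ⟨e, he⟩ := card_pos.1 (by omega : 0 < #T.edgeFinset)
          exact mem_image.2 ⟨e, hTsub he, by simp [c, mem_edgeFinset.1 he]⟩
        · exact image_subset_image sdiff_subset hk
    have hzero : 0 ∉ (G.edgeFinset \ T.edgeFinset).image c := by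
      simp +contextual [c]
    have hinj : Set.InjOn c (G.edgeFinset \ T.edgeFinset : Finset (Sym2 V)) := by
      intro e he f hf hef
      simp only [coe_sdiff, Set.mem_sdiff, mem_coe, mem_edgeFinset] at he hf
      exact (Fintype.equivFin _).injective (Fin.ext (by simpa [c, he.2, hf.2] using hef))
    rw [himage, card_insert_of_notMem hzero, card_image_of_injOn hinj,
      card_sdiff_of_subset hTsub]
    have := card_le_card hTsub
    omega

end LowerBound

end SimpleGraph

theorem mcNum_eq_of_forall_le {V : Type*} [Fintype V] {G : SimpleGraph V}
    [DecidableRel G.Adj] {k : ℕ} (hex : ∃ c, IsMCColoring G c ∧ #(G.edgeFinset.image c) = k)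
    (hle : ∀ c, IsMCColoring G c → #(G.edgeFinset.image c) ≤ k) : mcNum G = k := by
  have hncard (c : Sym2 V → ℕ) : (c '' G.edgeSet).ncard = #(G.edgeFinset.image c) := by
    rw [← coe_edgeFinset, ← coe_image, Set.ncard_coe_finset]
  have hbdd : ∀ j ∈ {j | ∃ c, IsMCColoring G c ∧ (c '' G.edgeSet).ncard = j}, j ≤ k := by
    rintro _ ⟨c, hc, rfl⟩
    exact hncard c ▸ hle c hc
  obtain ⟨c, hc, hck⟩ := hex
  have hmem : k ∈ {j | ∃ c, IsMCColoring G c ∧ (c '' G.edgeSet).ncard = j} :=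
    ⟨c, hc, (hncard c).trans hck⟩
  exact le_antisymm (csSup_le ⟨k, hmem⟩ hbdd) (le_csSup ⟨k, hbdd⟩ hmem)

/-- If `G` is a connected graph with `n > 3` vertices, `m` edges and maximum
degree `Δ(G) ≤ n - 2m/n`, then `mc(G) = m - n + 2`. -/
theorem mc_eq_of_maxDegree_le {V : Type*} [Fintype V] [DecidableEq V]
    (G : SimpleGraph V) [DecidableRel G.Adj] (hG : G.Connected)
    (hn : 3 < Fintype.card V)
    (hΔ : (G.maxDegree : ℝ) ≤
      (Fintype.card V : ℝ) - 2 * (G.edgeFinset.card : ℝ) / (Fintype.card V : ℝ)) :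
    (mcNum G : ℤ) = (G.edgeFinset.card : ℤ) - (Fintype.card V : ℤ) + 2 := by
  have hdeg := G.two_mul_card_edgeFinset_le_of_maxDegree_le hΔ
  obtain ⟨c₀, hc₀, hcard₀⟩ := exists_isMCColoring_card_image_add_card_eq hG (by omega)
  have hmc : mcNum G = G.edgeFinset.card + 2 - Fintype.card V :=
    mcNum_eq_of_forall_le ⟨c₀, hc₀, by omega⟩ fun c hc => by
      have := card_image_add_card_le_of_isMCColoring hG hn hdeg hc
      omega
  omega
end

section
/- If G is a connected simple graph with n vertices, m edges, and minimum degree δ(G) = s, then mc(G) ≤ m − n + s + 1. -/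
open SimpleGraph Filter Real

/-
Fix a vertex `v` of minimum degree `s` and, for every vertex `u`, a monochromatic path from `u`
to `v`. The union `E'` of these paths spans a connected spanning subgraph, so `|E'| ≥ n - 1`.
Each path has the color of its last edge, which is incident to `v`, so `E'` carries at most `s`
colors, while the remaining `m - |E'| ≤ m - n + 1` edges carry at most one new color each.
-/

theorem Set.ncard_image_le_ncard_image_add_ncard_diff {α β : Type*} (f : α → β) {s t : Set α}
    (hs : s.Finite) (ht : t.Finite) : (f '' s).ncard ≤ (f '' t).ncard + (s \ t).ncard :=
  calc (f '' s).ncard ≤ (f '' t ∪ f '' (s \ t)).ncard := by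
        refine Set.ncard_le_ncard ?_ ((ht.image f).union (hs.sdiff.image f))
        rw [← Set.image_union, Set.union_sdiff_self]
        exact Set.image_mono Set.subset_union_right
    _ ≤ (f '' t).ncard + (f '' (s \ t)).ncard := Set.ncard_union_le _ _
    _ ≤ (f '' t).ncard + (s \ t).ncard := by
        gcongr
        exact Set.ncard_image_le hs.sdiff

namespace SimpleGraph

variable {V : Type*} {G : SimpleGraph V}

lemma connected_fromEdgeSet_of_walks [Nonempty V] {E : Set (Sym2 V)} {v : V}
    (p : ∀ u, G.Walk u v) (hE : ∀ u, ∀ e ∈ (p u).edges, e ∈ E) :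
    (fromEdgeSet E).Connected := by
  have hreach (u : V) : (fromEdgeSet E).Reachable u v := by
    refine ⟨(p u).transfer _ fun e he ↦ ?_⟩
    rw [edgeSet_fromEdgeSet]
    exact ⟨hE u e he, G.not_isDiag_of_mem_edgeSet ((p u).edges_subset_edgeSet he)⟩
  exact Connected.mk fun a b ↦ (hreach a).trans (hreach b).symm

lemma card_le_ncard_add_one_of_walks [Finite V] [Nonempty V] {E : Set (Sym2 V)} {v : V}
    (p : ∀ u, G.Walk u v) (hE : ∀ u, ∀ e ∈ (p u).edges, e ∈ E) :
    Nat.card V ≤ E.ncard + 1 :=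
  calc Nat.card V ≤ Nat.card (fromEdgeSet E).edgeSet + 1 :=
        (connected_fromEdgeSet_of_walks p hE).card_vert_le_card_edgeSet_add_one
    _ ≤ E.ncard + 1 := by
        rw [Nat.card_coe_set_eq, edgeSet_fromEdgeSet]
        exact Nat.add_le_add_right (Set.ncard_le_ncard Set.sdiff_subset (Set.toFinite _)) 1

lemma Walk.mem_image_incidenceSet_of_forall_eq {α : Type*} {u v : V} {p : G.Walk u v}
    {c : Sym2 V → α} {k : α} (hk : ∀ e ∈ p.edges, c e = k) {e : Sym2 V}
    (he : e ∈ p.edges) :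
    c e ∈ c '' G.incidenceSet v := by
  have hnil : ¬p.Nil := Walk.edges_eq_nil.not.mp (List.ne_nil_of_mem he)
  have hlast := p.mk_penultimate_end_mem_edges hnil
  exact ⟨_, ⟨p.edges_subset_edgeSet hlast, Sym2.mem_mk_right _ _⟩,
    by rw [hk _ hlast, hk e he]⟩

end SimpleGraph

theorem IsMCColoring.ncard_image_edgeSet_add_card_le {V : Type*} [Fintype V] {G : SimpleGraph V}
    [DecidableRel G.Adj] {c : Sym2 V → ℕ} (hc : IsMCColoring G c) (v : V) :
    (c '' G.edgeSet).ncard + Fintype.card V ≤ G.edgeFinset.card + G.degree v + 1 := by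
  choose p _ k hk using fun u ↦ hc u v
  set E' := ⋃ u, {e | e ∈ (p u).edges}
  have hE' : E' ⊆ G.edgeSet :=
    Set.iUnion_subset fun u _ he ↦ (p u).edges_subset_edgeSet he
  have hspan : Fintype.card V ≤ E'.ncard + 1 := by
    have : Nonempty V := ⟨v⟩
    simpa only [Nat.card_eq_fintype_card] using
      card_le_ncard_add_one_of_walks (E := E') p fun u e he ↦ Set.mem_iUnion.mpr ⟨u, he⟩
  have hcolors : (c '' E').ncard ≤ G.degree v :=
    calc (c '' E').ncard ≤ (c '' G.incidenceSet v).ncard := by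
          refine Set.ncard_le_ncard ?_ (Set.toFinite _)
          rintro _ ⟨e, he, rfl⟩
          obtain ⟨u, hu⟩ := Set.mem_iUnion.mp he
          exact Walk.mem_image_incidenceSet_of_forall_eq (hk u) hu
      _ ≤ (G.incidenceSet v).ncard := Set.ncard_image_le (Set.toFinite _)
      _ = G.degree v := by
          classical
          rw [← coe_incidenceFinset, Set.ncard_coe_finset, card_incidenceFinset_eq_degree]
  have hsplit := Set.ncard_image_le_ncard_image_add_ncard_diff c
    (Set.toFinite G.edgeSet) (Set.toFinite E')
  have hrest := Set.ncard_sdiff_add_ncard_of_subset hE' (Set.toFinite _)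
  have hm : G.edgeSet.ncard = G.edgeFinset.card := by
    rw [← coe_edgeFinset, Set.ncard_coe_finset]
  omega

theorem mcNum_add_card_le {V : Type*} [Fintype V] {G : SimpleGraph V} [DecidableRel G.Adj]
    (hG : G.Connected) :
    mcNum G + Fintype.card V ≤ G.edgeFinset.card + G.minDegree + 1 := by
  have : Nonempty V := hG.nonempty
  obtain ⟨v, hv⟩ := G.exists_minimal_degree_vertex
  have hn : Fintype.card V ≤ G.edgeFinset.card + 1 := by
    simpa only [Nat.card_eq_fintype_card, edgeFinset_card] using
      hG.card_vert_le_card_edgeSet_add_one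
  have : mcNum G ≤ G.edgeFinset.card + G.minDegree + 1 - Fintype.card V := by
    refine csSup_le' ?_
    rintro _ ⟨c, hc, rfl⟩
    have := hc.ncard_image_edgeSet_add_card_le v
    omega
  omega

theorem mc_le_minDegree_general {V : Type*} [Fintype V]
    (G : SimpleGraph V) [DecidableRel G.Adj] (hG : G.Connected)
    (s : ℕ) (hs : G.minDegree = s) :
    (mcNum G : ℤ) ≤
      (G.edgeFinset.card : ℤ) - (Fintype.card V : ℤ) + (s : ℤ) + 1 := by
  have := mcNum_add_card_le hG
  omega

/-- If `G` is a connected graph with minimum degree `δ(G) = s`,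
then `mc(G) ≤ m - n + s + 1`. -/
theorem mc_le_minDegree {V : Type*} [Fintype V] [DecidableEq V]
    (G : SimpleGraph V) [DecidableRel G.Adj] (hG : G.Connected)
    (s : ℕ) (hs : G.minDegree = s) :
    (mcNum G : ℤ) ≤
      (G.edgeFinset.card : ℤ) - (Fintype.card V : ℤ) + (s : ℤ) + 1 :=
  mc_le_minDegree_general G hG s hs
end

section
/- Let ℓ > 0 be a real constant and let f : ℕ → ℝ satisfy ℓ·n·log n ≤ f(n) < n(n−1)/2 for all large n. Set p = p(n) = (f(n) + n·log log n)/n². Then with high probability (probability tending to 1 as n → ∞) the random graph G(n, p) satisfies mc(G(n, p)) < f(n). -/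
open SimpleGraph Filter Real

/-- The Erdős–Rényi probability that `G(n, q)` lies in the set `A`: each of the
`n.choose 2` possible edges appears independently with probability `q`, so a
graph with `m` edges has probability `q ^ m * (1 - q) ^ (n.choose 2 - m)`. -/
noncomputable def erProb (n : ℕ) (q : ℝ) (A : Set (SimpleGraph (Fin n))) : ℝ :=
  ∑ G : SimpleGraph (Fin n),
    A.indicator (fun G => q ^ G.edgeSet.ncard * (1 - q) ^ (n.choose 2 - G.edgeSet.ncard)) G

/-- A sequence of graph events holds with high probability in `G(n, q n)`:
its probability tends to `1` as `n → ∞`. -/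
def WHP (q : ℕ → ℝ) (A : ∀ n : ℕ, Set (SimpleGraph (Fin n))) : Prop :=
  Tendsto (fun n => erProb n (q n) (A n)) atTop (nhds 1)


/-!
An MC-coloring uses at most one color per edge, so `mc(G) ≤ e(G)` and it suffices that
w.h.p. `G(n, p)` has fewer than `f n` edges. By Markov's inequality applied to `2 ^ e(G)`,
`P(e(G) ≥ f) ≤ E[2 ^ e(G)] / 2 ^ f = (1 + p) ^ (n choose 2) / 2 ^ f`, which is at most
`exp (p (n choose 2) - f log 2)`.
Since `p (n choose 2) ≤ (f + n log log n) / 2` and `n log log n = o(n log n) = o(f)`, the exponent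
is at most `-(log 2 - 1/2) f + o(f) → -∞`.
-/

lemma mcNum_le_ncard_edgeSet {V : Type*} [Finite V] (G : SimpleGraph V) :
    mcNum G ≤ G.edgeSet.ncard :=
  csSup_le' <| by
    rintro k ⟨c, -, rfl⟩
    exact Set.ncard_image_le G.edgeSet.toFinite

lemma sum_pow_ncard_edgeSet_mul_pow {R : Type*} [CommSemiring R] (n : ℕ) (a b : R) :
    ∑ G : SimpleGraph (Fin n), a ^ G.edgeSet.ncard * b ^ (n.choose 2 - G.edgeSet.ncard)
      = (a + b) ^ n.choose 2 := by
  classical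
  have hcard : (⊤ : SimpleGraph (Fin n)).edgeFinset.card = n.choose 2 := by
    rw [card_edgeFinset_top_eq_card_choose_two, Fintype.card_fin]
  rw [← hcard, ← Finset.sum_pow_mul_eq_add_pow]
  refine Finset.sum_nbij' (fun G => G.edgeFinset) (fun t => fromEdgeSet ↑t) ?_ ?_ ?_ ?_ ?_
  · exact fun G _ => Finset.mem_powerset.2 (edgeFinset_mono le_top)
  · exact fun _ _ => Finset.mem_univ _
  · intro G _
    simp
  · intro t ht
    rw [Finset.mem_powerset, ← Finset.coe_subset, coe_edgeFinset] at ht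
    rw [← Finset.coe_inj, coe_edgeFinset, edgeSet_fromEdgeSet, sdiff_eq_left, Set.disjoint_left]
    exact fun e he => not_isDiag_of_mem_edgeSet _ (ht he)
  · intro G _
    rw [← coe_edgeFinset, Set.ncard_coe_finset]

section ErdosRenyi

variable {n : ℕ} {q : ℝ}

noncomputable def erWeight (n : ℕ) (q : ℝ) (G : SimpleGraph (Fin n)) : ℝ :=
  q ^ G.edgeSet.ncard * (1 - q) ^ (n.choose 2 - G.edgeSet.ncard)

lemma erProb_eq_sum_indicator (A : Set (SimpleGraph (Fin n))) :
    erProb n q A = ∑ G, A.indicator (erWeight n q) G :=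
  rfl

lemma erWeight_nonneg (hq0 : 0 ≤ q) (hq1 : q ≤ 1) (G : SimpleGraph (Fin n)) :
    0 ≤ erWeight n q G :=
  mul_nonneg (pow_nonneg hq0 _) (pow_nonneg (sub_nonneg.2 hq1) _)

lemma erProb_univ : erProb n q Set.univ = 1 := by
  simp only [erProb_eq_sum_indicator, Set.indicator_univ, erWeight,
    sum_pow_ncard_edgeSet_mul_pow, add_sub_cancel, one_pow]

lemma erProb_add_erProb_compl (A : Set (SimpleGraph (Fin n))) :
    erProb n q A + erProb n q Aᶜ = 1 := by
  rw [← erProb_univ, erProb_eq_sum_indicator, erProb_eq_sum_indicator, erProb_eq_sum_indicator,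
    ← Finset.sum_add_distrib, Set.indicator_univ]
  exact Finset.sum_congr rfl fun G _ => congrFun (Set.indicator_self_add_compl A _) G

lemma erProb_mono (hq0 : 0 ≤ q) (hq1 : q ≤ 1) {A B : Set (SimpleGraph (Fin n))}
    (hAB : A ⊆ B) :
    erProb n q A ≤ erProb n q B :=
  Finset.sum_le_sum fun G _ =>
    Set.indicator_le_indicator_of_subset hAB (erWeight_nonneg hq0 hq1) G

lemma erProb_le_one (hq0 : 0 ≤ q) (hq1 : q ≤ 1) (A : Set (SimpleGraph (Fin n))) :
    erProb n q A ≤ 1 :=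
  erProb_univ (n := n) (q := q) ▸ erProb_mono hq0 hq1 (Set.subset_univ A)

/-- Markov's inequality for the random variable `2 ^ e(G)`. -/
lemma erProb_le_ncard_edgeSet_le (hq0 : 0 ≤ q) (hq1 : q ≤ 1) (r : ℝ) :
    erProb n q {G | r ≤ G.edgeSet.ncard} ≤ (1 + q) ^ n.choose 2 / 2 ^ r := by
  have hterm (G : SimpleGraph (Fin n)) :
      {G : SimpleGraph (Fin n) | r ≤ G.edgeSet.ncard}.indicator (erWeight n q) G
        ≤ (2 * q) ^ G.edgeSet.ncard * (1 - q) ^ (n.choose 2 - G.edgeSet.ncard) / 2 ^ r := by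
    rw [mul_pow, mul_assoc, ← erWeight, le_div_iff₀ (by positivity)]
    by_cases hG : G ∈ {G : SimpleGraph (Fin n) | r ≤ G.edgeSet.ncard}
    · rw [Set.indicator_of_mem hG, mul_comm (2 ^ _)]
      gcongr
      · exact erWeight_nonneg hq0 hq1 G
      · exact_mod_cast (Real.rpow_le_rpow_of_exponent_le one_le_two hG).trans_eq
          (Real.rpow_natCast 2 _)
    · rw [Set.indicator_of_notMem hG, zero_mul]
      exact mul_nonneg (pow_nonneg zero_le_two _) (erWeight_nonneg hq0 hq1 G)
  calc erProb n q {G | r ≤ G.edgeSet.ncard}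
      ≤ ∑ G : SimpleGraph (Fin n),
          (2 * q) ^ G.edgeSet.ncard * (1 - q) ^ (n.choose 2 - G.edgeSet.ncard) / 2 ^ r :=
        Finset.sum_le_sum fun G _ => hterm G
    _ = (1 + q) ^ n.choose 2 / 2 ^ r := by
        rw [← Finset.sum_div, sum_pow_ncard_edgeSet_mul_pow]
        ring_nf

lemma one_add_pow_div_two_rpow_le_exp (hq : 0 ≤ 1 + q) (N : ℕ) (r : ℝ) :
    (1 + q) ^ N / 2 ^ r ≤ exp (q * N - r * log 2) := by
  rw [exp_sub, Real.rpow_def_of_pos two_pos, mul_comm (log 2), mul_comm q, exp_nat_mul]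
  gcongr
  linarith [add_one_le_exp q]

lemma one_sub_exp_le_erProb (hq0 : 0 ≤ q) (hq1 : q ≤ 1) {r : ℝ}
    {A : Set (SimpleGraph (Fin n))}
    (hA : ∀ G : SimpleGraph (Fin n), (G.edgeSet.ncard : ℝ) < r → G ∈ A) :
    1 - exp (q * n.choose 2 - r * log 2) ≤ erProb n q A := by
  have hcompl :
      {G : SimpleGraph (Fin n) | (G.edgeSet.ncard : ℝ) < r}ᶜ = {G | r ≤ G.edgeSet.ncard} := by
    ext G
    simp
  have hfew := erProb_add_erProb_compl (n := n) (q := q) {G | (G.edgeSet.ncard : ℝ) < r}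
  rw [hcompl] at hfew
  linarith [erProb_mono hq0 hq1 (show {G | (G.edgeSet.ncard : ℝ) < r} ⊆ A from hA),
    erProb_le_ncard_edgeSet_le (n := n) hq0 hq1 r,
    one_add_pow_div_two_rpow_le_exp (by linarith : 0 ≤ 1 + q) (n.choose 2) r]

lemma whp_of_forall_ncard_edgeSet_lt_mem {q r : ℕ → ℝ}
    {A : ∀ n : ℕ, Set (SimpleGraph (Fin n))}
    (hq : ∀ᶠ n in atTop, 0 ≤ q n ∧ q n ≤ 1)
    (hA : ∀ n (G : SimpleGraph (Fin n)), (G.edgeSet.ncard : ℝ) < r n → G ∈ A n)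
    (hexp : Tendsto (fun n => q n * n.choose 2 - r n * log 2) atTop atBot) :
    WHP q A := by
  have hlow : Tendsto (fun n => 1 - exp (q n * n.choose 2 - r n * log 2)) atTop (nhds 1) := by
    simpa using tendsto_const_nhds.sub (tendsto_exp_atBot.comp hexp)
  refine tendsto_of_tendsto_of_tendsto_of_le_of_le' hlow tendsto_const_nhds ?_ ?_
  · filter_upwards [hq] with n hqn using one_sub_exp_le_erProb hqn.1 hqn.2 (hA n)
  · filter_upwards [hq] with n hqn using erProb_le_one hqn.1 hqn.2 _

end ErdosRenyi

lemma tendsto_natCast_mul_log_atTop : Tendsto (fun n : ℕ => (n : ℝ) * log n) atTop atTop :=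
  tendsto_natCast_atTop_atTop.atTop_mul_atTop₀
    (tendsto_log_atTop.comp tendsto_natCast_atTop_atTop)

lemma eventually_log_log_natCast_nonneg : ∀ᶠ n : ℕ in atTop, 0 ≤ log (log n) :=
  (tendsto_log_atTop.comp
    (tendsto_log_atTop.comp tendsto_natCast_atTop_atTop)).eventually_ge_atTop 0

lemma eventually_natCast_mul_log_log_le {ε : ℝ} (hε : 0 < ε) :
    ∀ᶠ n : ℕ in atTop, n * log (log n) ≤ ε * (n * log n) := by
  have hlog := tendsto_log_atTop.comp tendsto_natCast_atTop_atTop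
  filter_upwards [(isLittleO_log_id_atTop.comp_tendsto hlog).bound hε,
    hlog.eventually_ge_atTop 0] with n hn hlog_nonneg
  simp only [Function.comp_apply, id] at hn hlog_nonneg
  rw [norm_of_nonneg hlog_nonneg] at hn
  calc (n : ℝ) * log (log n) ≤ n * ‖log (log n)‖ := by gcongr; exact le_abs_self _
    _ ≤ n * (ε * log n) := by gcongr
    _ = ε * (n * log n) := by ring

lemma div_sq_mul_choose_two_le {x : ℝ} (hx : 0 ≤ x) (n : ℕ) :
    x / n ^ 2 * n.choose 2 ≤ x / 2 := by
  rcases eq_or_ne n 0 with rfl | hn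
  · simpa using div_nonneg hx zero_le_two
  calc x / n ^ 2 * n.choose 2 ≤ x / n ^ 2 * (n ^ 2 / 2) := by
        rw [Nat.cast_choose_two]
        gcongr
        nlinarith
    _ = x / 2 := by field_simp

/-- Let `ℓ > 0` and let `f` satisfy `ℓ n log n ≤ f n < n(n-1)/2` for all large `n`.
With `p n = (f n + n log log n) / n²`, w.h.p. `mc(G(n, p)) < f n`. -/
theorem whp_mc_lt_at_p (ℓ : ℝ) (hℓ : 0 < ℓ) (f : ℕ → ℝ)
    (hf : ∀ᶠ n : ℕ in atTop,
      ℓ * n * Real.log n ≤ f n ∧ f n < (n : ℝ) * ((n : ℝ) - 1) / 2) :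
    WHP (fun n => (f n + n * Real.log (Real.log n)) / (n : ℝ) ^ 2)
      (fun n => {G | (mcNum G : ℝ) < f n}) := by
  set c := log 2 - 1 / 2 with hc_def
  have hc : 0 < c ∧ c < 1 := by
    constructor <;> linarith [log_two_gt_d9, log_two_lt_d9]
  have hf_top : Tendsto f atTop atTop :=
    tendsto_atTop_mono' _ (hf.mono fun n hn => by simpa only [mul_assoc] using hn.1)
      (tendsto_natCast_mul_log_atTop.const_mul_atTop hℓ)
  have hbounds : ∀ᶠ n : ℕ in atTop, f n < n * (n - 1) / 2 ∧ 0 ≤ f n ∧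
      0 ≤ n * log (log n) ∧ n * log (log n) ≤ c * f n := by
    filter_upwards [hf, hf_top.eventually_ge_atTop 0, eventually_log_log_natCast_nonneg,
      eventually_natCast_mul_log_log_le (mul_pos hc.1 hℓ)] with n hfn hf0 hlln hle
    refine ⟨hfn.2, hf0, by positivity, hle.trans ?_⟩
    nlinarith [hfn.1]
  refine whp_of_forall_ncard_edgeSet_lt_mem (r := f) ?_
    (fun n G hG => (Nat.cast_le.2 (mcNum_le_ncard_edgeSet G)).trans_lt hG) ?_
  · filter_upwards [hbounds] with n ⟨hf_lt, hf0, hlln, hle⟩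
    refine ⟨by positivity, div_le_one_of_le₀ ?_ (by positivity)⟩
    nlinarith
  · refine tendsto_atBot_mono' _ ?_
      (hf_top.const_mul_atTop_of_neg (neg_neg_of_pos (half_pos hc.1)))
    filter_upwards [hbounds] with n ⟨_, hf0, hlln, hle⟩
    have hlog2 : f n * log 2 = f n * c + f n / 2 := by rw [hc_def]; ring
    have := div_sq_mul_choose_two_le (add_nonneg hf0 hlln) n
    linarith
end
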